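/- For the heterogeneity estimate Ĥ(D^(k)) = H(softmax(Δb^(k), T)) with expected update E[Δb_i^(k)] = ηR(D_i^(k) S − E_i), the expected estimate difference between clients u and k satisfies E[Ĥ(D^(u)) − Ĥ(D^(k))] ≥ (1/2)((ηR S)/(C T))²·‖D^(k) − U‖₂² − (ηR ln C / T)·‖D^(u) − U‖_∞ − 𝒞δ, where 𝒞 = ηR(ηR + C²T ln C)/(C²T²) and δ = max_i |S/C − E_i|, under the first-order softmax approximation exp(x) ≈ 1 + x for the arguments ηR(D_i S − E_i)/T. -/

import Mathlib

/-!
With `S = ∑ c, E c` and `a = ηR/T`, both linearized softmax vectors satisfy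
`p i - 1/C = (a/C) (S (D i - 1/C) + (S/C - E i))`, so they are probability vectors close to
the uniform one. Since `log C - H(p) = (1/C) ∑ i, klFun (C p i)` and `klFun` is convex on
`[0, C]` with curvature at least `1/C`, this entropy gap lies between `½ ‖p - U‖₂²` (a Pinsker-type
bound, applied to client `k`) and `log C ‖p - U‖₁` (from chords of `klFun`, applied to client `u`).
The `E`-terms only cost `δ`: they sum to zero, so in `‖pk - U‖₂²` the cross term reduces to
`∑ i, Dk i (S/C - E i) ≥ -δ`.
-/

open Real Finset InformationTheory

lemma hasDerivAt_klFun_sub_sq_div (B : ℝ) {x : ℝ} (hx : x ≠ 0) :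
    HasDerivAt (fun s ↦ klFun s - (s - 1) ^ 2 / (2 * B)) (log x - (x - 1) / B) x :=
  ((hasDerivAt_klFun hx).fun_sub ((((hasDerivAt_id' x).sub_const 1).fun_pow 2).div_const
    (2 * B))).congr_deriv (by ring)

/-- On `[0, B]` the second derivative `1/s` of `klFun` is at least `1/B`. -/
lemma sq_div_le_klFun {B t : ℝ} (hB : 1 ≤ B) (ht0 : 0 ≤ t) (htB : t ≤ B) :
    (t - 1) ^ 2 / (2 * B) ≤ klFun t := by
  set g : ℝ → ℝ := fun s ↦ klFun s - (s - 1) ^ 2 / (2 * B)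
  have hg : ContinuousOn g (Set.Icc 0 B) := by fun_prop
  suffices 0 ≤ g t by simpa [g, sub_nonneg] using this
  have hg1 : g 1 = 0 := by simp [g, klFun_one]
  rcases le_total t 1 with ht1 | ht1
  · have hanti : AntitoneOn g (Set.Icc 0 1) := by
      refine antitoneOn_of_hasDerivWithinAt_nonpos (f' := fun x ↦ log x - (x - 1) / B)
        (convex_Icc 0 1) (hg.mono (Set.Icc_subset_Icc_right hB)) (fun x hx ↦ ?_) (fun x hx ↦ ?_)
      all_goals rw [interior_Icc] at hx
      · exact (hasDerivAt_klFun_sub_sq_div B hx.1.ne').hasDerivWithinAt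
      · have h1 := log_le_sub_one_of_pos hx.1
        have h2 : x - 1 ≤ (x - 1) / B := by
          rw [le_div_iff₀ (by linarith)]; nlinarith [hx.2]
        linarith
    exact hg1 ▸ hanti ⟨ht0, ht1⟩ ⟨zero_le_one, le_rfl⟩ ht1
  · have hmono : MonotoneOn g (Set.Icc 1 B) := by
      refine monotoneOn_of_hasDerivWithinAt_nonneg (f' := fun x ↦ log x - (x - 1) / B)
        (convex_Icc 1 B) (hg.mono (Set.Icc_subset_Icc_left zero_le_one))
        (fun x hx ↦ ?_) (fun x hx ↦ ?_)
      all_goals rw [interior_Icc] at hx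
      · exact (hasDerivAt_klFun_sub_sq_div B (by linarith [hx.1] : x ≠ 0)).hasDerivWithinAt
      · have hx0 : 0 < x := by linarith [hx.1]
        have h1 := one_sub_inv_le_log_of_pos hx0
        have h2 : (x - 1) / B ≤ (x - 1) / x :=
          div_le_div_of_nonneg_left (by linarith [hx.1]) hx0 hx.2.le
        have h3 : 1 - x⁻¹ = (x - 1) / x := by field_simp
        linarith
    exact hg1 ▸ hmono ⟨le_rfl, by linarith⟩ ⟨ht1, htB⟩ ht1

/-- `klFun` lies below its chords over `[0, 1]` and `[1, B]`; the second has slope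
`klFun B / (B - 1) ≤ 2 log B - 1` because `B ≥ 2`. -/
lemma klFun_le_log_mul_abs_add {B t : ℝ} (hB : 2 ≤ B) (ht0 : 0 ≤ t) (htB : t ≤ B) :
    klFun t ≤ log B * |t - 1| + (log B - 1) * (t - 1) := by
  rcases le_total t 1 with ht1 | ht1
  · rw [abs_of_nonpos (by linarith), klFun_apply]
    linarith [mul_log_nonpos ht0 ht1]
  · have hB1 : 0 < B - 1 := by linarith
    have hchord : klFun t ≤ (t - 1) / (B - 1) * klFun B := by
      have h := convexOn_klFun.2 (Set.mem_Ici.2 zero_le_one) (Set.mem_Ici.2 (by linarith : 0 ≤ B))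
        (div_nonneg (by linarith) hB1.le : 0 ≤ (B - t) / (B - 1))
        (div_nonneg (by linarith) hB1.le : 0 ≤ (t - 1) / (B - 1)) (by field_simp; ring)
      simp only [smul_eq_mul, klFun_one, mul_zero, zero_add] at h
      rwa [show (B - t) / (B - 1) * 1 + (t - 1) / (B - 1) * B = t by field_simp; ring] at h
    have hklB : klFun B ≤ (2 * log B - 1) * (B - 1) := by
      rw [klFun_apply]
      nlinarith [log_nonneg (by linarith : (1 : ℝ) ≤ B)]
    rw [abs_of_nonneg (by linarith)]
    calc klFun t ≤ (t - 1) / (B - 1) * ((2 * log B - 1) * (B - 1)) :=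
          hchord.trans (mul_le_mul_of_nonneg_left hklB (div_nonneg (by linarith) hB1.le))
      _ = _ := by field_simp; ring

section Entropy

variable {ι : Type*} [Fintype ι] {p q : ι → ℝ}

lemma nonempty_of_sum_eq_one (hp : ∑ i, p i = 1) : Nonempty ι :=
  univ_nonempty_iff.mp (nonempty_of_sum_ne_zero (hp.symm ▸ one_ne_zero))

lemma log_card_add_sum_mul_log_eq_sum_klFun_div (hp : ∑ i, p i = 1) :
    log (Fintype.card ι) + ∑ i, p i * log (p i) =
      (∑ i, klFun (Fintype.card ι * p i)) / Fintype.card ι := by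
  set n : ℝ := ↑(Fintype.card ι)
  have := nonempty_of_sum_eq_one hp
  have hn : n ≠ 0 := by positivity
  have hkl (i : ι) : klFun (n * p i) = n * (p i * log n + p i * log (p i)) + 1 - n * p i := by
    have h := negMulLog_mul n (p i)
    simp only [negMulLog] at h
    rw [klFun_apply]
    linear_combination -h
  simp only [hkl, sum_sub_distrib, sum_add_distrib, ← mul_sum, ← sum_mul, hp, sum_const,
    card_univ, nsmul_eq_mul]
  field_simp
  ring

lemma sum_sq_sub_inv_card_div_two_le (hp0 : ∀ i, 0 ≤ p i) (hp : ∑ i, p i = 1) :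
    (∑ i, (p i - 1 / Fintype.card ι) ^ 2) / 2 ≤ log (Fintype.card ι) + ∑ i, p i * log (p i) := by
  have := nonempty_of_sum_eq_one hp
  have hn : (1 : ℝ) ≤ Fintype.card ι := Nat.one_le_cast.mpr Fintype.card_pos
  set n : ℝ := ↑(Fintype.card ι)
  rw [log_card_add_sum_mul_log_eq_sum_klFun_div hp, sum_div, sum_div]
  refine sum_le_sum fun i _ ↦ ?_
  have hpi : p i ≤ 1 := hp ▸ single_le_sum (fun j _ ↦ hp0 j) (mem_univ i)
  have h := sq_div_le_klFun (t := n * p i) hn (mul_nonneg (by linarith) (hp0 i))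
    (by nlinarith [hp0 i])
  calc (p i - 1 / n) ^ 2 / 2 = (n * p i - 1) ^ 2 / (2 * n) / n := by field_simp
    _ ≤ klFun (n * p i) / n := by gcongr

lemma log_card_add_sum_mul_log_le (hι : 2 ≤ Fintype.card ι) (hp0 : ∀ i, 0 ≤ p i)
    (hp : ∑ i, p i = 1) :
    log (Fintype.card ι) + ∑ i, p i * log (p i) ≤
      log (Fintype.card ι) * ∑ i, |p i - 1 / Fintype.card ι| := by
  have hn : (2 : ℝ) ≤ Fintype.card ι := by exact_mod_cast hι
  set n : ℝ := ↑(Fintype.card ι)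
  have hcentered : ∑ i, (p i - 1 / n) = 0 := by
    rw [sum_sub_distrib, hp, sum_const, card_univ, nsmul_eq_mul]
    field_simp
    ring
  have hpoint (i : ι) :
      klFun (n * p i) / n ≤ log n * |p i - 1 / n| + (log n - 1) * (p i - 1 / n) := by
    have hpi : p i ≤ 1 := hp ▸ single_le_sum (fun j _ ↦ hp0 j) (mem_univ i)
    have h := klFun_le_log_mul_abs_add (t := n * p i) hn (mul_nonneg (by linarith) (hp0 i))
      (by nlinarith [hp0 i])
    rw [div_le_iff₀ (by linarith)]
    have hsub : n * p i - 1 = n * (p i - 1 / n) := by field_simp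
    rw [hsub, abs_mul, abs_of_pos (by linarith)] at h
    linarith
  calc log n + ∑ i, p i * log (p i) = ∑ i, klFun (n * p i) / n := by
        rw [log_card_add_sum_mul_log_eq_sum_klFun_div hp, sum_div]
    _ ≤ ∑ i, (log n * |p i - 1 / n| + (log n - 1) * (p i - 1 / n)) :=
        sum_le_sum fun i _ ↦ hpoint i
    _ = log n * ∑ i, |p i - 1 / n| := by
        rw [sum_add_distrib, ← mul_sum, ← mul_sum, hcentered, mul_zero, add_zero]

theorem sum_sq_div_two_sub_le_entropy_sub_entropy (hι : 2 ≤ Fintype.card ι)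
    (hp0 : ∀ i, 0 ≤ p i) (hp : ∑ i, p i = 1) (hq0 : ∀ i, 0 ≤ q i) (hq : ∑ i, q i = 1) :
    (∑ i, (q i - 1 / Fintype.card ι) ^ 2) / 2
        - log (Fintype.card ι) * ∑ i, |p i - 1 / Fintype.card ι| ≤
      (-∑ i, p i * log (p i)) - (-∑ i, q i * log (q i)) := by
  linarith [sum_sq_sub_inv_card_div_two_le hq0 hq, log_card_add_sum_mul_log_le hι hp0 hp]

end Entropy

section Linearization

variable {ι : Type*} [Fintype ι] {c μ δ : ℝ} {D E p : ι → ℝ}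

lemma sum_eq_one_of_eq_linearized (hD : ∑ i, D i = 1)
    (hp : ∀ i, p i = (1 + c * (D i * ∑ j, E j - E i)) / Fintype.card ι) :
    ∑ i, p i = 1 := by
  have := nonempty_of_sum_eq_one hD
  simp only [hp, ← sum_div, sum_add_distrib, ← mul_sum, sum_sub_distrib, ← sum_mul, hD,
    sum_const, card_univ, nsmul_eq_mul]
  field_simp
  ring

lemma sub_inv_card_eq_of_eq_linearized
    (hp : ∀ i, p i = (1 + c * (D i * ∑ j, E j - E i)) / Fintype.card ι) (i : ι) :
    p i - 1 / Fintype.card ι = c / Fintype.card ι *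
      ((∑ j, E j) * (D i - 1 / Fintype.card ι) + ((∑ j, E j) / Fintype.card ι - E i)) := by
  rw [hp]
  ring

lemma sum_abs_sub_inv_card_le_of_eq_linearized [Nonempty ι] (hc : 0 ≤ c) (hE0 : ∀ i, 0 ≤ E i)
    (hE : ∑ j, E j ≤ 1) (hp : ∀ i, p i = (1 + c * (D i * ∑ j, E j - E i)) / Fintype.card ι)
    (hμ : ∀ i, |D i - 1 / Fintype.card ι| ≤ μ)
    (hδ : ∀ i, |(∑ j, E j) / Fintype.card ι - E i| ≤ δ) :
    ∑ i, |p i - 1 / Fintype.card ι| ≤ c * (μ + δ) := by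
  set n : ℝ := ↑(Fintype.card ι)
  have hn : 0 < n := by positivity
  have hS0 : 0 ≤ ∑ j, E j := sum_nonneg fun i _ ↦ hE0 i
  have hpoint (i : ι) : |p i - 1 / n| ≤ c / n * (μ + δ) := by
    rw [sub_inv_card_eq_of_eq_linearized hp, abs_mul, abs_of_nonneg (by positivity)]
    gcongr
    calc _ ≤ |(∑ j, E j) * (D i - 1 / n)| + |(∑ j, E j) / n - E i| := abs_add_le _ _
      _ ≤ |D i - 1 / n| + |(∑ j, E j) / n - E i| := by
          rw [abs_mul, abs_of_nonneg hS0]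
          gcongr
          exact mul_le_of_le_one_left (abs_nonneg _) hE
      _ ≤ μ + δ := add_le_add (hμ i) (hδ i)
  calc ∑ i, |p i - 1 / n| ≤ ∑ _i : ι, c / n * (μ + δ) := sum_le_sum fun i _ ↦ hpoint i
    _ = c * (μ + δ) := by
        rw [sum_const, card_univ, nsmul_eq_mul, ← mul_assoc, mul_div_cancel₀ _ hn.ne']

lemma sum_sq_sub_inv_card_ge_of_eq_linearized (hD0 : ∀ i, 0 ≤ D i) (hD : ∑ i, D i = 1)
    (hE0 : ∀ i, 0 ≤ E i) (hE : ∑ j, E j ≤ 1)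
    (hp : ∀ i, p i = (1 + c * (D i * ∑ j, E j - E i)) / Fintype.card ι)
    (hδ : ∀ i, |(∑ j, E j) / Fintype.card ι - E i| ≤ δ) :
    (c / Fintype.card ι) ^ 2 * ((∑ j, E j) ^ 2 * ∑ i, (D i - 1 / Fintype.card ι) ^ 2 - 2 * δ) ≤
      ∑ i, (p i - 1 / Fintype.card ι) ^ 2 := by
  simp only [sub_inv_card_eq_of_eq_linearized hp, mul_pow, ← mul_sum]
  refine mul_le_mul_of_nonneg_left ?_ (sq_nonneg _)
  have := nonempty_of_sum_eq_one hD
  set n : ℝ := ↑(Fintype.card ι)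
  have hn : 0 < n := by positivity
  set S := ∑ j, E j
  have hS0 : 0 ≤ S := sum_nonneg fun i _ ↦ hE0 i
  have hδ0 : 0 ≤ δ := (abs_nonneg _).trans (hδ (Classical.arbitrary ι))
  have hcentered : ∑ i, (S / n - E i) = 0 := by
    rw [sum_sub_distrib, sum_const, card_univ, nsmul_eq_mul]
    field_simp
    ring
  have hcross : -δ ≤ ∑ i, (D i - 1 / n) * (S / n - E i) :=
    calc -δ = ∑ i, D i * -δ := by rw [← sum_mul, hD, one_mul]
      _ ≤ ∑ i, D i * (S / n - E i) :=
          sum_le_sum fun i _ ↦ mul_le_mul_of_nonneg_left (neg_le_of_abs_le (hδ i)) (hD0 i)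
      _ = ∑ i, (D i - 1 / n) * (S / n - E i) := by
          simp only [sub_mul, sum_sub_distrib, ← mul_sum, hcentered, mul_zero, sub_zero]
  calc _ ≤ S ^ 2 * ∑ i, (D i - 1 / n) ^ 2 + 2 * S * ∑ i, (D i - 1 / n) * (S / n - E i) := by
        nlinarith [mul_le_mul_of_nonneg_left hcross hS0, mul_le_mul_of_nonneg_right hE hδ0]
    _ = ∑ i, (S ^ 2 * (D i - 1 / n) ^ 2 + 2 * S * ((D i - 1 / n) * (S / n - E i))) := by
        rw [sum_add_distrib, mul_sum, mul_sum]
    _ ≤ _ := sum_le_sum fun i _ ↦ by nlinarith [sq_nonneg (S / n - E i)]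

end Linearization

/-- Theorem 1 of the paper: Under the first-order approximation of the
tempered softmax, the heterogeneity estimate `Ĥ(D) = H(softmax(Δb, T))`, with expected
bias update `E[Δb_i] = ηR(D_i S − E_i)` and linearization
`softmax(Δb,T)_i ≈ (1 + ηR(D_i S − E_i)/T)/C`, satisfies for two clients `u, k`:
`Ĥ(D^u) − Ĥ(D^k) ≥ ½ (ηRS/(CT))² ‖D^k − U‖₂² − (ηR ln C / T) ‖D^u − U‖_∞ − 𝒞 δ`,
where `𝒞 = ηR(ηR + C²T ln C)/(C²T²)` and `δ = max_i |S/C − E_i|`. -/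
theorem heterogeneity_estimate_separation (C : ℕ) (hC : 2 ≤ C)
    (η R T : ℝ) (hη : 0 < η) (hR : 0 < R) (hT : 0 < T)
    (Du Dk : Fin C → ℝ)
    (hDu1 : ∑ i, Du i = 1)
    (hDk0 : ∀ i, 0 ≤ Dk i) (hDk1 : ∑ i, Dk i = 1)
    (E : Fin C → ℝ) (hE0 : ∀ i, 0 ≤ E i)
    (hS1 : (∑ c, E c) ≤ 1)
    -- linearized tempered softmax of the expected bias updates of the two clients
    (pu pk : Fin C → ℝ)
    (hpu : ∀ i, pu i = (1 + η * R * (Du i * (∑ c, E c) - E i) / T) / (C : ℝ))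
    (hpk : ∀ i, pk i = (1 + η * R * (Dk i * (∑ c, E c) - E i) / T) / (C : ℝ))
    (hpu0 : ∀ i, 0 ≤ pu i) (hpk0 : ∀ i, 0 ≤ pk i) :
    (-∑ i, pu i * Real.log (pu i)) - (-∑ i, pk i * Real.log (pk i)) ≥
      (1 / 2) * ((η * R * (∑ c, E c)) / ((C : ℝ) * T)) ^ 2
          * (∑ i, (Dk i - 1 / (C : ℝ)) ^ 2)
        - (η * R * Real.log C / T)
          * Finset.univ.sup' ⟨⟨0, by omega⟩, Finset.mem_univ _⟩
              (fun i => |Du i - 1 / (C : ℝ)|)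
        - (η * R * (η * R + (C : ℝ) ^ 2 * T * Real.log C) / ((C : ℝ) ^ 2 * T ^ 2))
          * Finset.univ.sup' ⟨⟨0, by omega⟩, Finset.mem_univ _⟩
              (fun i => |(∑ c, E c) / (C : ℝ) - E i|) := by
  have : Nonempty (Fin C) := ⟨⟨0, by omega⟩⟩
  set μ := Finset.univ.sup' ⟨⟨0, by omega⟩, Finset.mem_univ _⟩ fun i ↦ |Du i - 1 / (C : ℝ)|
  set δ := Finset.univ.sup' ⟨⟨0, by omega⟩, Finset.mem_univ _⟩
    fun i ↦ |(∑ c, E c) / (C : ℝ) - E i|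
  have hlin {D : Fin C → ℝ} {p : Fin C → ℝ}
      (hp : ∀ i, p i = (1 + η * R * (D i * (∑ c, E c) - E i) / T) / (C : ℝ)) (i : Fin C) :
      p i = (1 + η * R / T * (D i * ∑ c, E c - E i)) / Fintype.card (Fin C) := by
    rw [hp, Fintype.card_fin]
    ring
  have hμ (i : Fin C) : |Du i - 1 / (Fintype.card (Fin C) : ℝ)| ≤ μ := by
    rw [Fintype.card_fin]
    exact le_sup' (fun j ↦ |Du j - 1 / (C : ℝ)|) (mem_univ i)
  have hδ (i : Fin C) : |(∑ c, E c) / (Fintype.card (Fin C) : ℝ) - E i| ≤ δ := by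
    rw [Fintype.card_fin]
    exact le_sup' (fun j ↦ |(∑ c, E c) / (C : ℝ) - E j|) (mem_univ i)
  have hgap := sum_sq_div_two_sub_le_entropy_sub_entropy (by simpa using hC) hpu0
    (sum_eq_one_of_eq_linearized hDu1 (hlin hpu)) hpk0 (sum_eq_one_of_eq_linearized hDk1 (hlin hpk))
  have hu := sum_abs_sub_inv_card_le_of_eq_linearized (by positivity) hE0 hS1 (hlin hpu) hμ hδ
  have hk := sum_sq_sub_inv_card_ge_of_eq_linearized hDk0 hDk1 hE0 hS1 (hlin hpk) hδ
  simp only [Fintype.card_fin] at hgap hu hk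
  have hlogC : 0 ≤ log C := log_nonneg (by exact_mod_cast (by omega : 1 ≤ C))
  rw [ge_iff_le]
  calc _ = (η * R / T / C) ^ 2 * ((∑ c, E c) ^ 2 * ∑ i, (Dk i - 1 / (C : ℝ)) ^ 2 - 2 * δ) / 2
        - log C * (η * R / T * (μ + δ)) := by
        field_simp
        ring
    _ ≤ _ := by linarith [mul_le_mul_of_nonneg_left hu hlogC]
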